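/- The generating function B_4(q,z) = Σ_w q^{|w|} z^{t(w)}, summed over all words w over {1,2,3,4}, where t(w) counts indices i with w_{i+1} − w_i = 2, equals 1/(1 − 4q − 2q²(z−1)). -/

import Mathlib

/-!
Fix the alphabet `Fin k` and a step `d` with `k ≤ 2 * d`, and let `a n` be the sum of
`z ^ (number of positions i with w (i + 1) = w i + d)` over the words `w` of length `n`.
Appending a letter `c` to a nonempty word creates a new rise exactly when `c = last + d`, so
`a (n + 2) = k * a (n + 1) + (z - 1) * e (n + 1)`, where `e` only sees words whose last letter is
`< k - d`. Since `k ≤ 2 * d`, such a last letter never completes a rise itself, hence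
`e (n + 1) = (k - d) * a n`. The recurrence `a (n + 2) = k * a (n + 1) + (k - d) * (z - 1) * a n`
with `a 0 = 1`, `a 1 = k` says that `a` has generating function `1 / (1 - k q - (k - d) (z - 1) q²)`.
-/

/-- For a word `w` of length `n` over {1,2,3,4} (modeled as `Fin n → Fin 4`,
letters `(w i : ℕ) + 1`), `tStat w = |{i : w_{i+1} − w_i = 2}|`. -/
noncomputable def tStat {n : ℕ} (w : Fin n → Fin 4) : ℕ :=
  Nat.card {ij : Fin n × Fin n //
    (ij.2 : ℕ) = (ij.1 : ℕ) + 1 ∧ ((w ij.2 : ℕ) = (w ij.1 : ℕ) + 2)}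

open Finset PowerSeries

theorem Fin.sum_pi_snoc {M : Type*} [AddCommMonoid M] {n k : ℕ} (f : (Fin (n + 1) → Fin k) → M) :
    ∑ w, f w = ∑ v : Fin n → Fin k, ∑ c : Fin k, f (Fin.snoc v c) := by
  rw [← (Fin.snocEquiv fun _ => Fin k).sum_comp, Fintype.sum_prod_type, Finset.sum_comm]
  rfl

theorem Fin.sum_ite_val_eq {M : Type*} [AddCommMonoid M] (k m : ℕ) (x : M) :
    ∑ c : Fin k, (if (c : ℕ) = m then x else 0) = if m < k then x else 0 := by
  split_ifs with hm
  · have hc (c : Fin k) : (c : ℕ) = m ↔ c = ⟨m, hm⟩ := by rw [Fin.ext_iff]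
    simp [hc]
  · exact Finset.sum_eq_zero fun c _ => if_neg (by omega)

theorem Fin.card_filter_val_add_lt (k d : ℕ) : #{c : Fin k | (c : ℕ) + d < k} = k - d := by
  simp_rw [← Nat.lt_sub_iff_add_lt, Fin.card_filter_val_lt]
  omega

theorem Fin.sum_ite_val_add_lt {R : Type*} [NonAssocSemiring R] (k d : ℕ) (x : R) :
    ∑ c : Fin k, (if (c : ℕ) + d < k then x else 0) = ((k - d : ℕ) : R) * x := by
  rw [← Finset.sum_filter, Finset.sum_const, Fin.card_filter_val_add_lt, nsmul_eq_mul]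

section Rises

variable {k : ℕ} (d : ℕ)

def riseCount {n : ℕ} (w : Fin (n + 1) → Fin k) : ℕ :=
  #{i : Fin n | (w i.succ : ℕ) = w i.castSucc + d}

@[simp]
theorem riseCount_fin_one (w : Fin 1 → Fin k) : riseCount d w = 0 := rfl

theorem riseCount_snoc {n : ℕ} (w : Fin (n + 1) → Fin k) (c : Fin k) :
    riseCount d (Fin.snoc w c : Fin (n + 2) → Fin k) =
      riseCount d w + if (c : ℕ) = w (Fin.last n) + d then 1 else 0 := by
  simp only [riseCount, card_filter, Fin.sum_univ_castSucc (n := n), Fin.succ_castSucc,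
    Fin.snoc_castSucc, Fin.succ_last, Fin.snoc_last]

end Rises

section RiseSum

variable {R : Type*} [CommRing R] (k d : ℕ) (z : R)

noncomputable def riseSum : ℕ → R
  | 0 => 1
  | n + 1 => ∑ w : Fin (n + 1) → Fin k, z ^ riseCount d w

theorem riseSum_one : riseSum k d z 1 = k := by
  simp [riseSum]

theorem sum_pow_riseCount_snoc {n : ℕ} (w : Fin (n + 1) → Fin k) :
    ∑ c : Fin k, z ^ riseCount d (Fin.snoc w c : Fin (n + 2) → Fin k) =
      z ^ riseCount d w * (k + if (w (Fin.last n) : ℕ) + d < k then z - 1 else 0) := by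
  have hpow (p : Prop) [Decidable p] : z ^ (if p then 1 else 0) = 1 + if p then z - 1 else 0 := by
    split_ifs <;> ring
  simp_rw [riseCount_snoc, pow_add, ← mul_sum, hpow, sum_add_distrib, Fin.sum_ite_val_eq]
  simp

theorem riseSum_add_two_eq_sum_ite_last (n : ℕ) :
    riseSum k d z (n + 2) = k * riseSum k d z (n + 1) +
      (z - 1) * ∑ w : Fin (n + 1) → Fin k,
        if (w (Fin.last n) : ℕ) + d < k then z ^ riseCount d w else 0 := by
  simp only [riseSum]
  rw [Fin.sum_pi_snoc (n := n + 1)]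
  simp_rw [sum_pow_riseCount_snoc, mul_add, sum_add_distrib, mul_sum, mul_ite, mul_zero]
  congr 1
  · exact sum_congr rfl fun w _ => mul_comm _ _
  · exact sum_congr rfl fun w _ => by split_ifs <;> ring

theorem sum_ite_last_pow_riseCount (hkd : k ≤ 2 * d) (n : ℕ) :
    ∑ w : Fin (n + 1) → Fin k, (if (w (Fin.last n) : ℕ) + d < k then z ^ riseCount d w else 0) =
      ((k - d : ℕ) : R) * riseSum k d z n := by
  simp_rw [Fin.sum_pi_snoc, Fin.snoc_last]
  cases n with
  | zero => simp [riseSum, Fin.card_filter_val_add_lt]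
  | succ m =>
    have hrise (w : Fin (m + 1) → Fin k) (c : Fin k) (hc : (c : ℕ) + d < k) :
        riseCount d (Fin.snoc w c : Fin (m + 2) → Fin k) = riseCount d w := by
      rw [riseCount_snoc, if_neg (by omega), add_zero]
    rw [riseSum, mul_sum]
    refine sum_congr rfl fun w _ => ?_
    rw [← Fin.sum_ite_val_add_lt]
    refine sum_congr rfl fun c _ => ?_
    split_ifs with hc
    · rw [hrise w c hc]
    · rfl

theorem riseSum_add_two (hkd : k ≤ 2 * d) (n : ℕ) :
    riseSum k d z (n + 2) =
      k * riseSum k d z (n + 1) + ((k - d : ℕ) : R) * (z - 1) * riseSum k d z n := by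
  rw [riseSum_add_two_eq_sum_ite_last, sum_ite_last_pow_riseCount k d z hkd]
  ring

end RiseSum

theorem PowerSeries.mul_mk_eq_one_of_recurrence {R : Type*} [CommRing R] {a : ℕ → R} {b c : R}
    (h0 : a 0 = 1) (h1 : a 1 = b) (hrec : ∀ n, a (n + 2) = b * a (n + 1) + c * a n) :
    (1 - C b * X - C c * X ^ 2) * mk a = 1 := by
  ext n
  simp only [sub_mul, one_mul, mul_assoc, map_sub, coeff_C_mul, coeff_X_pow_mul',
    coeff_mk, coeff_one]
  rcases n with _ | _ | n
  · simp [h0]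
  · simp [h0, h1]
  · simp [hrec]

theorem tStat_eq_riseCount {n : ℕ} (w : Fin (n + 1) → Fin 4) : tStat w = riseCount 2 w := by
  rw [tStat, Nat.card_eq_fintype_card, Fintype.card_subtype, riseCount]
  symm
  refine Finset.card_bij (fun i _ => (i.castSucc, i.succ)) ?_ ?_ ?_
  · intro i hi
    simpa using hi
  · intro i _ j _ h
    simpa using congrArg Prod.fst h
  · rintro ⟨a, b⟩ hab
    simp only [mem_filter, mem_univ, true_and] at hab
    obtain ⟨hb, hw⟩ := hab
    have ha : (a : ℕ) < n := by omega
    have hsucc : (⟨a, ha⟩ : Fin n).succ = b := Fin.ext (by simp [hb])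
    refine ⟨⟨a, ha⟩, ?_, by rw [hsucc]; rfl⟩
    simpa [hsucc] using hw

theorem tStat_of_fin_zero (w : Fin 0 → Fin 4) : tStat w = 0 := by
  simp [tStat]

/-- `B_4(q,z) = Σ_w q^{|w|} z^{t(w)} = 1/(1 − 4q − 2q²(z−1))`, as an identity
of formal power series in `q` over `ℤ[z]`. -/
theorem stmt14 :
    (1 - 4 * PowerSeries.X - 2 * PowerSeries.X ^ 2 *
        (PowerSeries.C (Polynomial.X : Polynomial ℤ) - 1)) *
    PowerSeries.mk (fun n => ∑ w : Fin n → Fin 4,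
        (Polynomial.X : Polynomial ℤ) ^ tStat w) = 1 := by
  have hseq : (fun n => ∑ w : Fin n → Fin 4, (Polynomial.X : Polynomial ℤ) ^ tStat w) =
      riseSum 4 2 Polynomial.X := by
    funext n
    cases n with
    | zero => simp [riseSum, tStat_of_fin_zero]
    | succ n => simp [riseSum, tStat_eq_riseCount]
  rw [hseq]
  convert mul_mk_eq_one_of_recurrence rfl (riseSum_one 4 2 _)
    (riseSum_add_two 4 2 Polynomial.X le_rfl) using 2
  simp only [map_mul, map_sub, map_one, map_natCast]
  push_cast
  ring
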